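/- arXiv:2412.11798 — 2 statements merged into one kernel-verified Lean document; each statement's English description precedes it below -/
import Mathlib

section
/- Let E ∈ V and E_h ∈ V_h; set e := E − E_h and η := E − P E. Assume Galerkin orthogonality b♯(e, v) = 0 for all v ∈ V_h^c and the weak-consistency bound |b♯(e, w_h)| ≤ D |w_h|_nc for all w_h ∈ V_h, where D ≥ 0. Then, with c_γ := 8 max(γ_p², ρ⁻² γ_d²) + max(1, ρ⁻²)(γ_div + 3 γ_div²), the asymptotically optimal a priori error estimate (1 − c_γ) |||e|||♯² ≤ (1 + 4 γ_div) |||η|||♯² + 2 ρ⁻¹ |||e|||♯ · D holds. -/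
open scoped RealInnerProductSpace

/-- The energy norm `|||v||| := (ω²‖v‖_L² + ‖C v‖_M²)^{1/2}`. -/
noncomputable def tnorm {L M : Type*} [NormedAddCommGroup L] [InnerProductSpace ℝ L]
    [NormedAddCommGroup M] [InnerProductSpace ℝ M]
    (ω : ℝ) (C : L →ₗ[ℝ] M) (v : L) : ℝ :=
  Real.sqrt (ω ^ 2 * ‖v‖ ^ 2 + ‖C v‖ ^ 2)

/-- The augmented energy norm `|||v|||♯ := (ω²‖v‖_L² + ‖C v‖_M² + s(v,v))^{1/2}`. -/
noncomputable def tnormS {L M : Type*} [NormedAddCommGroup L] [InnerProductSpace ℝ L]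
    [NormedAddCommGroup M] [InnerProductSpace ℝ M]
    (ω : ℝ) (C : L →ₗ[ℝ] M) (s : L →ₗ[ℝ] L →ₗ[ℝ] ℝ) (v : L) : ℝ :=
  Real.sqrt (ω ^ 2 * ‖v‖ ^ 2 + ‖C v‖ ^ 2 + s v v)

/-!
Split the error as `e = η + ψ` with `η = E − P E` and the discrete part `ψ = P E − E_h ∈ V_h`.
These are `b♯⁺`-orthogonal, so `|||e|||♯² = |||η|||♯² + |||ψ|||♯²` and only `|||ψ|||♯²` needs a
bound. Testing the error with `ψ` gives `|||ψ|||♯² = b♯(e, ψ) + 2ω²(e, ψ)_L`, and the Helmholtz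
splitting `ψ = θ + k`, `k = Π_K ψ`, turns `(e, ψ)_L` into `(e, θ)_L + (η, k)_L + ‖k‖²`.
Weak consistency controls `b♯(e, ψ)`. A duality argument (the adjoint solution `ζ` with datum
`θ`, and Galerkin orthogonality against a conforming approximation of `ζ`) bounds `ω²(e, θ)_L`
by `ω‖θ‖ |||e|||♯`. Since `ψ` is `L`-orthogonal to `K_h`, divergence conformity bounds `ω‖k‖`
by `‖C ψ‖ + |ψ|_nc`. Young's inequality then absorbs all `ψ`-terms into the left-hand side.
-/

lemma mul_add_mul_le_sqrt_mul_sqrt (a b c d : ℝ) :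
    a * c + b * d ≤ √(a ^ 2 + b ^ 2) * √(c ^ 2 + d ^ 2) := by
  rw [← Real.sqrt_mul (by positivity)]
  exact Real.le_sqrt_of_sq_le (by nlinarith [sq_nonneg (a * d - b * c)])

lemma le_mul_csInf {S : Set ℝ} (hS : S.Nonempty) {a c : ℝ} (hc : 0 ≤ c)
    (h : ∀ t ∈ S, a ≤ c * t) : a ≤ c * sInf S := by
  rcases hc.eq_or_lt with rfl | hc
  · obtain ⟨t, ht⟩ := hS
    simpa using h t ht
  · rw [← div_le_iff₀' hc]
    exact le_csInf hS fun t ht => (div_le_iff₀' hc).2 (h t ht)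

lemma eq_zero_of_inner_sub_self_eq_zero {E : Type*} [NormedAddCommGroup E]
    [InnerProductSpace ℝ E] {x p : E} (h₁ : ⟪x - p, p⟫ = 0) (h₂ : ⟪x, p⟫ = 0) : p = 0 := by
  rw [inner_sub_left, h₂, zero_sub, neg_eq_zero] at h₁
  exact inner_self_eq_zero.mp h₁

lemma add_sq_le_max_mul_add {a n x ρ : ℝ} (ha : 0 ≤ a) (hn : 0 ≤ n) (hx : 0 ≤ x) (hρ : 0 < ρ)
    (h : ρ * n ≤ √x) : a + n ^ 2 ≤ max 1 (ρ⁻¹ ^ 2) * (a + x) := by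
  have hn' : n ^ 2 ≤ ρ⁻¹ ^ 2 * x := by
    rw [← le_inv_mul_iff₀ hρ] at h
    calc n ^ 2 ≤ (ρ⁻¹ * √x) ^ 2 := by gcongr
      _ ≤ ρ⁻¹ ^ 2 * x := by rw [mul_pow, Real.sq_sqrt hx]
  have h₁ : (1 : ℝ) ≤ max 1 (ρ⁻¹ ^ 2) := le_max_left _ _
  have h₂ : ρ⁻¹ ^ 2 ≤ max 1 (ρ⁻¹ ^ 2) := le_max_right _ _
  nlinarith

lemma sq_add_le_two_mul_max_mul (p d r F σ : ℝ) :
    (p * F + d * (r * σ)) ^ 2 ≤ 2 * max (p ^ 2) (r ^ 2 * d ^ 2) * (F ^ 2 + σ ^ 2) := by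
  have h₁ : p ^ 2 ≤ max (p ^ 2) (r ^ 2 * d ^ 2) := le_max_left _ _
  have h₂ : r ^ 2 * d ^ 2 ≤ max (p ^ 2) (r ^ 2 * d ^ 2) := le_max_right _ _
  calc _ ≤ 2 * ((p * F) ^ 2 + (d * (r * σ)) ^ 2) := add_sq_le
    _ = 2 * (p ^ 2 * F ^ 2 + r ^ 2 * d ^ 2 * σ ^ 2) := by ring
    _ ≤ _ := by nlinarith [sq_nonneg F, sq_nonneg σ]

namespace MaxwellDG

variable {L M : Type*} [NormedAddCommGroup L] [InnerProductSpace ℝ L]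
  [NormedAddCommGroup M] [InnerProductSpace ℝ M]

section Forms

variable (ω : ℝ) (C : L →ₗ[ℝ] M) (s : L →ₗ[ℝ] L →ₗ[ℝ] ℝ)

def b (v w : L) : ℝ := -ω ^ 2 * ⟪v, w⟫ + ⟪C v, C w⟫

def bSharp (v w : L) : ℝ := b ω C v w + s v w

def bSharpPlus (v w : L) : ℝ := ω ^ 2 * ⟪v, w⟫ + ⟪C v, C w⟫ + s v w

def energySq (v : L) : ℝ := ω ^ 2 * ‖v‖ ^ 2 + ‖C v‖ ^ 2 + s v v

end Forms

variable {ω : ℝ} {C : L →ₗ[ℝ] M} {s : L →ₗ[ℝ] L →ₗ[ℝ] ℝ}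

lemma energySq_add_of_bSharpPlus_eq_zero (hs_symm : ∀ v w, s v w = s w v) {η ψ : L}
    (h : bSharpPlus ω C s η ψ = 0) :
    energySq ω C s (η + ψ) = energySq ω C s η + energySq ω C s ψ := by
  unfold energySq bSharpPlus at *
  simp only [norm_add_sq_real, map_add, LinearMap.add_apply, hs_symm ψ η]
  linear_combination 2 * h

lemma energySq_eq_bSharp_add_inner {η ψ : L} (h : bSharpPlus ω C s η ψ = 0) :
    energySq ω C s ψ = bSharp ω C s (η + ψ) ψ + 2 * ω ^ 2 * ⟪η + ψ, ψ⟫ := by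
  unfold energySq bSharp b bSharpPlus at *
  simp only [map_add, LinearMap.add_apply, inner_add_left, real_inner_self_eq_norm_sq]
  linear_combination -h

lemma inner_sub_eq_zero_of_map_eq_zero (hω : ω ≠ 0) {e η w : L} (hse : s e w = 0)
    (hsη : s η w = 0) (hC : C w = 0) (he : bSharp ω C s e w = 0)
    (hη : bSharpPlus ω C s η w = 0) : ⟪e - η, w⟫ = 0 := by
  simp only [bSharp, b, bSharpPlus, hse, hsη, hC, inner_zero_right, add_zero] at he hη
  rw [inner_sub_left]
  have hω2 : ω ^ 2 ≠ 0 := pow_ne_zero 2 hω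
  have h₁ : ⟪e, w⟫ = 0 := by simpa [hω2] using he
  have h₂ : ⟪η, w⟫ = 0 := by simpa [hω2] using hη
  rw [h₁, h₂, sub_zero]

lemma b_le_tnorm_mul_tnorm (v w : L) : b ω C v w ≤ tnorm ω C v * tnorm ω C w := by
  have h₁ : -⟪v, w⟫ ≤ ‖v‖ * ‖w‖ := (neg_le_abs _).trans (abs_real_inner_le_norm v w)
  have h₂ : ⟪C v, C w⟫ ≤ ‖C v‖ * ‖C w‖ := real_inner_le_norm _ _
  calc b ω C v w ≤ (ω * ‖v‖) * (ω * ‖w‖) + ‖C v‖ * ‖C w‖ := by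
        unfold b; nlinarith [sq_nonneg ω]
    _ ≤ tnorm ω C v * tnorm ω C w := by
        unfold tnorm
        convert mul_add_mul_le_sqrt_mul_sqrt (ω * ‖v‖) ‖C v‖ (ω * ‖w‖) ‖C w‖ using 3 <;> ring

lemma inner_eq_b_add_bSharp_sub {V : Submodule ℝ L}
    (hs_conf : ∀ v w : L, v ∈ V ∨ w ∈ V → s v w = 0) {θ ζ E Eh v : L} (hζ : ζ ∈ V)
    (hadj : ∀ w ∈ V, b ω C w ζ = ⟪w, θ⟫) (hE : E ∈ V) (hv : v ∈ V)
    (hGO : bSharp ω C s (E - Eh) v = 0) :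
    ⟪E - Eh, θ⟫ = b ω C (E - Eh) (ζ - v) + (bSharp ω C s Eh ζ - ⟪Eh, θ⟫) := by
  have hEζ := hadj E hE
  have hsEζ := hs_conf E ζ (.inl hE)
  have hsζv := hs_conf (E - Eh) (ζ - v) (.inr (V.sub_mem hζ hv))
  unfold bSharp b at *
  simp only [map_sub, LinearMap.sub_apply, inner_sub_left, inner_sub_right] at *
  linear_combination -hEζ + hGO + hsζv - hsEζ

lemma energySq_le_of_split {e η ψ k : L} (he : e = η + ψ) (hηψ : bSharpPlus ω C s η ψ = 0)
    (hk : ⟪ψ - k, k⟫ = 0) {c W : ℝ} (hb : bSharp ω C s e ψ ≤ c)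
    (hW : ω ^ 2 * ⟪e, ψ - k⟫ ≤ W) :
    energySq ω C s ψ ≤ c + 2 * W + 2 * (ω * ‖η‖ * (ω * ‖k‖)) + 2 * (ω * ‖k‖) ^ 2 := by
  have hηk : ω ^ 2 * ⟪η, k⟫ ≤ (ω * ‖η‖) * (ω * ‖k‖) := by
    rw [mul_mul_mul_comm, ← sq]
    exact mul_le_mul_of_nonneg_left (real_inner_le_norm η k) (sq_nonneg ω)
  have hψk : ⟪ψ, k⟫ = ‖k‖ ^ 2 := by
    rw [inner_sub_left, sub_eq_zero] at hk
    rw [hk, real_inner_self_eq_norm_sq]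
  subst he
  rw [energySq_eq_bSharp_add_inner hηψ]
  simp only [inner_sub_right, inner_add_left, hψk] at hW ⊢
  nlinarith

lemma energySq_eq_of_inner_sub_eq_zero {ψ k : L} (hk : ⟪ψ - k, k⟫ = 0) :
    energySq ω C s ψ = (ω * ‖ψ - k‖) ^ 2 + (ω * ‖k‖) ^ 2 + (‖C ψ‖ ^ 2 + s ψ ψ) := by
  have h : ‖ψ‖ ^ 2 = ‖ψ - k‖ ^ 2 + ‖k‖ ^ 2 := by
    conv_lhs => rw [← sub_add_cancel ψ k]
    rw [norm_add_sq_real, hk]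
    ring
  unfold energySq
  linear_combination ω ^ 2 * h

lemma sq_mul_norm_le_energySq (hs_pos : ∀ v, 0 ≤ s v v) (v : L) :
    (ω * ‖v‖) ^ 2 ≤ energySq ω C s v := by
  have := hs_pos v
  unfold energySq
  nlinarith [sq_nonneg ‖C v‖]

lemma tnorm_sq_add_sq_sqrt (hs_pos : ∀ v, 0 ≤ s v v) (v : L) :
    tnorm ω C v ^ 2 + √(s v v) ^ 2 = energySq ω C s v := by
  rw [tnorm, Real.sq_sqrt (by positivity), Real.sq_sqrt (hs_pos v), energySq]

lemma s_sub_sub_eq_of_mem {V : Submodule ℝ L} (hs_conf : ∀ v w : L, v ∈ V ∨ w ∈ V → s v w = 0)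
    {E : L} (hE : E ∈ V) (x : L) : s (E - x) (E - x) = s x x := by
  simp only [map_sub, LinearMap.sub_apply, hs_conf E _ (.inl hE), hs_conf _ E (.inr hE)]
  ring

lemma sq_mul_inner_le_of_adjoint {V Vh : Submodule ℝ L} (hω : 0 < ω)
    (hs_conf : ∀ v w : L, v ∈ V ∨ w ∈ V → s v w = 0) {θ ζ E Eh : L} {γp γd δ : ℝ}
    (hζ : ζ ∈ V) (hadj : ∀ w ∈ V, b ω C w ζ = ⟪w, θ⟫)
    (happrox : sInf {t : ℝ | ∃ v ∈ Vh ⊓ V, t = ω * tnorm ω C (ζ - v)} ≤ γp * ‖θ‖)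
    (hcons : ω * |⟪Eh, θ⟫ - bSharp ω C s Eh ζ| ≤ γd * ‖θ‖ * δ) (hE : E ∈ V)
    (hGO : ∀ v ∈ Vh ⊓ V, bSharp ω C s (E - Eh) v = 0) :
    ω ^ 2 * ⟪E - Eh, θ⟫ ≤ ω * ‖θ‖ * (γp * tnorm ω C (E - Eh) + γd * δ) := by
  set S := {t : ℝ | ∃ v ∈ Vh ⊓ V, t = ω * tnorm ω C (ζ - v)}
  have hF : 0 ≤ ω * tnorm ω C (E - Eh) := by unfold tnorm; positivity
  have hconforming : ω ^ 2 * ⟪E - Eh, θ⟫ - ω ^ 2 * (bSharp ω C s Eh ζ - ⟪Eh, θ⟫) ≤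
      ω * tnorm ω C (E - Eh) * sInf S := by
    refine le_mul_csInf (⟨_, 0, zero_mem _, rfl⟩ : S.Nonempty) hF ?_
    rintro t ⟨v, hv, rfl⟩
    rw [inner_eq_b_add_bSharp_sub hs_conf hζ hadj hE hv.2 (hGO v hv)]
    calc _ = ω ^ 2 * b ω C (E - Eh) (ζ - v) := by ring
      _ ≤ ω ^ 2 * (tnorm ω C (E - Eh) * tnorm ω C (ζ - v)) := by
          gcongr; exact b_le_tnorm_mul_tnorm _ _
      _ = _ := by ring
  have hcons' : ω ^ 2 * (bSharp ω C s Eh ζ - ⟪Eh, θ⟫) ≤ ω * (γd * ‖θ‖ * δ) := by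
    have h : bSharp ω C s Eh ζ - ⟪Eh, θ⟫ ≤ |⟪Eh, θ⟫ - bSharp ω C s Eh ζ| := by
      rw [abs_sub_comm]; exact le_abs_self _
    calc _ = ω * (ω * (bSharp ω C s Eh ζ - ⟪Eh, θ⟫)) := by ring
      _ ≤ ω * (γd * ‖θ‖ * δ) :=
          mul_le_mul_of_nonneg_left ((mul_le_mul_of_nonneg_left h hω.le).trans hcons) hω.le
  nlinarith [mul_le_mul_of_nonneg_left happrox hF]

end MaxwellDG

-- `T, A, S` stand for `|||e|||♯², |||η|||♯², |||ψ|||♯²`, and `u, q, z` for `ω‖θ‖, ω‖k‖, ω‖η‖`;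
-- `X` is the factor from the duality argument, `R` the divergence-conformity bound for `q`,
-- and `w = ‖C ψ‖² + s(ψ, ψ)`.
lemma a_priori_bound_of_estimates {A S T u q w z R X c γ μ Mb : ℝ}
    (hT : T = A + S) (hS : S = u ^ 2 + q ^ 2 + w) (hw : 0 ≤ w) (hz : 0 ≤ z) (hzA : z ^ 2 ≤ A)
    (hq : 0 ≤ q) (hqR : q ≤ γ * R) (hR : R ^ 2 ≤ μ * w) (hμ : 0 ≤ μ) (hγ : 0 ≤ γ)
    (hX : X ^ 2 ≤ 2 * Mb * T) (hid : S ≤ c + 2 * (u * X) + 2 * (z * q) + 2 * q ^ 2) :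
    (1 - (8 * Mb + μ * (γ + 3 * γ ^ 2))) * T ≤ (1 + 4 * γ) * A + 2 * c := by
  have hwT : μ * w ≤ μ * T := by gcongr; nlinarith [sq_nonneg u, sq_nonneg q, sq_nonneg z]
  -- Young: `2 u X ≤ u² / 2 + 2 X²`, and `u² ≤ S - q²` lets half of `S` be absorbed.
  have hS' : S ≤ 2 * c + 4 * X ^ 2 + 4 * z * q + 3 * q ^ 2 := by
    nlinarith [sq_nonneg (u - 2 * X)]
  have hzq : 4 * z * q ≤ γ * (4 * A + μ * T) := by
    have : 4 * z * R ≤ 4 * z ^ 2 + R ^ 2 := by nlinarith [sq_nonneg (2 * z - R)]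
    calc 4 * z * q ≤ γ * (4 * z * R) := by nlinarith
      _ ≤ γ * (4 * A + μ * T) := by gcongr; linarith
  have hq2 : q ^ 2 ≤ γ ^ 2 * (μ * T) := by
    calc q ^ 2 ≤ (γ * R) ^ 2 := by gcongr
      _ ≤ γ ^ 2 * (μ * T) := by rw [mul_pow]; gcongr; linarith
  nlinarith

open MaxwellDG

theorem a_priori_error_estimate_general
    {L M : Type*} [NormedAddCommGroup L] [InnerProductSpace ℝ L]
    [NormedAddCommGroup M] [InnerProductSpace ℝ M]
    (ω : ℝ) (hω : 0 < ω)
    (V Vh : Submodule ℝ L)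
    (C : L →ₗ[ℝ] M)
    (s : L →ₗ[ℝ] L →ₗ[ℝ] ℝ)
    (hs_symm : ∀ v w : L, s v w = s w v)
    (hs_pos : ∀ v : L, 0 ≤ s v v)
    (hs_conf : ∀ v w : L, v ∈ V ∨ w ∈ V → s v w = 0)
    (nc : L → ℝ)
    (hnc_nonneg : ∀ v : L, 0 ≤ nc v)
    (projK : L →ₗ[ℝ] L)
    (hprojK_mem : ∀ v : L, projK v ∈ V ∧ C (projK v) = 0)
    (hprojK_orth : ∀ v : L, ∀ w ∈ V, C w = 0 → ⟪v - projK v, w⟫ = 0)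
    (projKh : L →ₗ[ℝ] L)
    (hprojKh_mem : ∀ v : L, projKh v ∈ Vh ⊓ V ∧ C (projKh v) = 0)
    (hprojKh_orth : ∀ v : L, ∀ w ∈ Vh ⊓ V, C w = 0 → ⟪v - projKh v, w⟫ = 0)
    (γp γd : ℝ) (hγd : 0 ≤ γd)
    (hadj : ∀ θ : L, (∀ w ∈ V, C w = 0 → ⟪θ, w⟫ = 0) →
      ∃ ζ ∈ V, (∀ w ∈ V, -ω ^ 2 * ⟪w, ζ⟫ + ⟪C w, C ζ⟫ = ⟪w, θ⟫) ∧
        sInf {t : ℝ | ∃ v ∈ Vh ⊓ V, t = ω * tnorm ω C (ζ - v)} ≤ γp * ‖θ‖ ∧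
        ∀ wh ∈ Vh,
          ω * |⟪wh, θ⟫ - (-ω ^ 2 * ⟪wh, ζ⟫ + ⟪C wh, C ζ⟫ + s wh ζ)| ≤
            γd * ‖θ‖ * nc wh)
    (γdiv : ℝ) (hγdiv : 0 ≤ γdiv)
    (hdiv : ∀ vh ∈ Vh, projKh vh = 0 →
      ω * ‖projK vh‖ ≤ γdiv * Real.sqrt (‖C vh‖ ^ 2 + nc vh ^ 2))
    (P : L →ₗ[ℝ] L)
    (hP_mem : ∀ v : L, P v ∈ Vh)
    (hP_orth : ∀ v : L, ∀ wh ∈ Vh,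
      ω ^ 2 * ⟪v - P v, wh⟫ + ⟪C (v - P v), C wh⟫ + s (v - P v) wh = 0)
    (ρ : ℝ) (hρ : 0 < ρ)
    (hρs : ∀ vh ∈ Vh, ρ * nc vh ≤ Real.sqrt (s vh vh))
    (E : L) (hE : E ∈ V) (Eh : L) (hEh : Eh ∈ Vh)
    (hGO : ∀ v ∈ Vh ⊓ V,
      -ω ^ 2 * ⟪E - Eh, v⟫ + ⟪C (E - Eh), C v⟫ + s (E - Eh) v = 0)
    (D : ℝ) (hD : 0 ≤ D)
    (hweak : ∀ wh ∈ Vh,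
      |(-ω ^ 2 * ⟪E - Eh, wh⟫ + ⟪C (E - Eh), C wh⟫ + s (E - Eh) wh)| ≤ D * nc wh) :
    (1 - (8 * max (γp ^ 2) (ρ⁻¹ ^ 2 * γd ^ 2) +
          max 1 (ρ⁻¹ ^ 2) * (γdiv + 3 * γdiv ^ 2))) *
        (ω ^ 2 * ‖E - Eh‖ ^ 2 + ‖C (E - Eh)‖ ^ 2 + s (E - Eh) (E - Eh)) ≤
      (1 + 4 * γdiv) *
          (ω ^ 2 * ‖E - P E‖ ^ 2 + ‖C (E - P E)‖ ^ 2 + s (E - P E) (E - P E)) +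
        2 * ρ⁻¹ * tnormS ω C s (E - Eh) * D := by
  set e := E - Eh
  set η := E - P E
  set ψ := P E - Eh
  set k := projK ψ
  show (1 - _) * energySq ω C s e ≤
    (1 + 4 * γdiv) * energySq ω C s η + 2 * ρ⁻¹ * tnormS ω C s e * D
  have hψ : ψ ∈ Vh := Vh.sub_mem (hP_mem E) hEh
  have he : e = η + ψ := by simp only [e, η, ψ]; abel
  have hηψ : bSharpPlus ω C s η ψ = 0 := hP_orth E ψ hψ
  have hk : ⟪ψ - k, k⟫ = 0 := hprojK_orth ψ k (hprojK_mem ψ).1 (hprojK_mem ψ).2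
  have hT : energySq ω C s e = energySq ω C s η + energySq ω C s ψ := by
    rw [he]; exact energySq_add_of_bSharpPlus_eq_zero hs_symm hηψ
  have hS := energySq_eq_of_inner_sub_eq_zero (ω := ω) (C := C) (s := s) hk
  have hKh : projKh ψ = 0 := by
    obtain ⟨hm, hC⟩ := hprojKh_mem ψ
    refine eq_zero_of_inner_sub_self_eq_zero (hprojKh_orth ψ _ hm hC) ?_
    simpa [he] using inner_sub_eq_zero_of_map_eq_zero hω.ne' (hs_conf e _ (.inr hm.2))
      (hs_conf η _ (.inr hm.2)) hC (hGO _ hm) (hP_orth E _ hm.1)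
  have hncEh : nc Eh ≤ ρ⁻¹ * √(s e e) := by
    rw [le_inv_mul_iff₀ hρ, s_sub_sub_eq_of_mem hs_conf hE Eh]
    exact hρs Eh hEh
  obtain ⟨ζ, hζ, hζeq, happrox, hcons⟩ := hadj (ψ - k) (hprojK_orth ψ)
  have hW : ω ^ 2 * ⟪e, ψ - k⟫ ≤
      ω * ‖ψ - k‖ * (γp * tnorm ω C e + γd * (ρ⁻¹ * √(s e e))) :=
    sq_mul_inner_le_of_adjoint hω hs_conf hζ hζeq happrox ((hcons Eh hEh).trans
      (mul_le_mul_of_nonneg_left hncEh (mul_nonneg hγd (norm_nonneg _)))) hE hGO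
  have hA := sq_mul_norm_le_energySq hs_pos (ω := ω) (C := C) η
  have hsψ : s ψ ψ ≤ energySq ω C s e := by
    rw [hT, hS]; nlinarith [sq_nonneg ‖C ψ‖, sq_nonneg (ω * ‖ψ - k‖), sq_nonneg (ω * ‖k‖)]
  have hc : bSharp ω C s e ψ ≤ ρ⁻¹ * tnormS ω C s e * D :=
    calc bSharp ω C s e ψ ≤ D * nc ψ := (le_abs_self _).trans (hweak ψ hψ)
      _ ≤ D * (ρ⁻¹ * √(s ψ ψ)) := by gcongr; exact (le_inv_mul_iff₀ hρ).2 (hρs ψ hψ)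
      _ ≤ D * (ρ⁻¹ * tnormS ω C s e) := by gcongr; exact Real.sqrt_le_sqrt hsψ
      _ = _ := by ring
  refine (a_priori_bound_of_estimates hT hS (add_nonneg (sq_nonneg _) (hs_pos ψ)) (by positivity)
    hA (by positivity) (hdiv ψ hψ hKh) ?_ (by positivity) hγdiv ?_
    (energySq_le_of_split he hηψ hk hc hW)).trans_eq (by ring)
  · rw [Real.sq_sqrt (by positivity)]
    exact add_sq_le_max_mul_add (sq_nonneg _) (hnc_nonneg ψ) (hs_pos ψ) hρ (hρs ψ hψ)
  · rw [← tnorm_sq_add_sq_sqrt hs_pos e]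
    exact sq_add_le_two_mul_max_mul _ _ _ _ _

/-- **Asymptotically optimal a priori error estimate.**
With `e := E − E_h`, `η := E − P E`,
`c_γ := 8 max(γ_p², ρ⁻² γ_d²) + max(1, ρ⁻²)(γ_div + 3 γ_div²)`, under Galerkin
orthogonality on conforming test functions and the weak-consistency bound
`|b♯(e, w_h)| ≤ D |w_h|_nc` on `V_h`, one has
`(1 − c_γ) |||e|||♯² ≤ (1 + 4 γ_div) |||η|||♯² + 2 ρ⁻¹ |||e|||♯ D`. -/
theorem a_priori_error_estimate
    {L M : Type*} [NormedAddCommGroup L] [InnerProductSpace ℝ L]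
    [NormedAddCommGroup M] [InnerProductSpace ℝ M]
    (ω : ℝ) (hω : 0 < ω)
    (Vs V Vh : Submodule ℝ L) (hVVs : V ≤ Vs) (hVhVs : Vh ≤ Vs)
    (C : L →ₗ[ℝ] M)
    (s : L →ₗ[ℝ] L →ₗ[ℝ] ℝ)
    (hs_symm : ∀ v w : L, s v w = s w v)
    (hs_pos : ∀ v : L, 0 ≤ s v v)
    (hs_conf : ∀ v w : L, v ∈ V ∨ w ∈ V → s v w = 0)
    (nc : L → ℝ)
    (hnc_nonneg : ∀ v : L, 0 ≤ nc v)
    (hnc_add : ∀ v w : L, nc (v + w) ≤ nc v + nc w)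
    (hnc_smul : ∀ (c : ℝ) (v : L), nc (c • v) = |c| * nc v)
    (hnc_conf : ∀ v ∈ V, nc v = 0)
    (projK : L →ₗ[ℝ] L)
    (hprojK_mem : ∀ v : L, projK v ∈ V ∧ C (projK v) = 0)
    (hprojK_orth : ∀ v : L, ∀ w ∈ V, C w = 0 → ⟪v - projK v, w⟫ = 0)
    (projKh : L →ₗ[ℝ] L)
    (hprojKh_mem : ∀ v : L, projKh v ∈ Vh ⊓ V ∧ C (projKh v) = 0)
    (hprojKh_orth : ∀ v : L, ∀ w ∈ Vh ⊓ V, C w = 0 → ⟪v - projKh v, w⟫ = 0)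
    (γp γd : ℝ) (hγp : 0 ≤ γp) (hγd : 0 ≤ γd)
    (hadj : ∀ θ : L, (∀ w ∈ V, C w = 0 → ⟪θ, w⟫ = 0) →
      ∃ ζ ∈ V, (∀ w ∈ V, -ω ^ 2 * ⟪w, ζ⟫ + ⟪C w, C ζ⟫ = ⟪w, θ⟫) ∧
        sInf {t : ℝ | ∃ v ∈ Vh ⊓ V, t = ω * tnorm ω C (ζ - v)} ≤ γp * ‖θ‖ ∧
        ∀ wh ∈ Vh,
          ω * |⟪wh, θ⟫ - (-ω ^ 2 * ⟪wh, ζ⟫ + ⟪C wh, C ζ⟫ + s wh ζ)| ≤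
            γd * ‖θ‖ * nc wh)
    (γdiv : ℝ) (hγdiv : 0 ≤ γdiv)
    (hdiv : ∀ vh ∈ Vh, projKh vh = 0 →
      ω * ‖projK vh‖ ≤ γdiv * Real.sqrt (‖C vh‖ ^ 2 + nc vh ^ 2))
    (P : L →ₗ[ℝ] L)
    (hP_mem : ∀ v : L, P v ∈ Vh)
    (hP_orth : ∀ v : L, ∀ wh ∈ Vh,
      ω ^ 2 * ⟪v - P v, wh⟫ + ⟪C (v - P v), C wh⟫ + s (v - P v) wh = 0)
    (ρ : ℝ) (hρ : 0 < ρ)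
    (hρs : ∀ vh ∈ Vh, ρ * nc vh ≤ Real.sqrt (s vh vh))
    (E : L) (hE : E ∈ V) (Eh : L) (hEh : Eh ∈ Vh)
    (hGO : ∀ v ∈ Vh ⊓ V,
      -ω ^ 2 * ⟪E - Eh, v⟫ + ⟪C (E - Eh), C v⟫ + s (E - Eh) v = 0)
    (D : ℝ) (hD : 0 ≤ D)
    (hweak : ∀ wh ∈ Vh,
      |(-ω ^ 2 * ⟪E - Eh, wh⟫ + ⟪C (E - Eh), C wh⟫ + s (E - Eh) wh)| ≤ D * nc wh) :
    (1 - (8 * max (γp ^ 2) (ρ⁻¹ ^ 2 * γd ^ 2) +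
          max 1 (ρ⁻¹ ^ 2) * (γdiv + 3 * γdiv ^ 2))) *
        (ω ^ 2 * ‖E - Eh‖ ^ 2 + ‖C (E - Eh)‖ ^ 2 + s (E - Eh) (E - Eh)) ≤
      (1 + 4 * γdiv) *
          (ω ^ 2 * ‖E - P E‖ ^ 2 + ‖C (E - P E)‖ ^ 2 + s (E - P E) (E - P E)) +
        2 * ρ⁻¹ * tnormS ω C s (E - Eh) * D :=
  a_priori_error_estimate_general ω hω V Vh C s hs_symm hs_pos hs_conf nc hnc_nonneg projK
    hprojK_mem hprojK_orth projKh hprojKh_mem hprojKh_orth γp γd hγd hadj γdiv hγdiv hdiv P hP_mem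
    hP_orth ρ hρ hρs E hE Eh hEh hGO D hD hweak
end

section
/- For every v_h ∈ V_h there exists w_h ∈ V_h such that |||w_h|||♯ ≤ (1 + 2 C_st) |||v_h|||♯ and b♯(v_h, w_h) ≥ (1 − c'_γ) |||v_h|||♯², where c'_γ := 2(γ_p + ρ⁻¹ γ_d / 2 + max(1, ρ⁻²) γ_div²). In particular, if c'_γ < 1, then the discrete inf-sup constant satisfies: inf over v_h ∈ V_h with |||v_h|||♯ = 1 of sup over w_h ∈ V_h with |||w_h|||♯ = 1 of |b♯(v_h, w_h)| is at least (1 − c'_γ)/(1 + 2 C_st). -/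
/-!
Decompose `v_h` `L²`-orthogonally as `v_h = p + q + θ` with `p = Π_{K_h} v_h`, `q = Π_K (v_h - p)`
and `θ ⊥ K`; let `ζ` be the adjoint solution with data `θ`, put `ζ_h = P^c ζ`, and test with
`w_h = v_h - 2p + 2ω² ζ_h`. Then
`b♯(v_h, w_h) = |||v_h|||♯² - 2ω²‖v_h‖² + 2ω²‖p‖² + 2ω² b(v_h, ζ_h)`, and `b(v_h, ζ_h)` equals
`(v_h, θ)_L = ‖θ‖²` up to a consistency error (`γ_d`, absorbed by the stabilization through `ρ`) and
an approximation error (`γ_p`). Since `‖v_h‖² = ‖p‖² + ‖q‖² + ‖θ‖²`, what is left is `2ω²‖q‖²`, and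
`q` is the `K`-component of `v_h - p ⊥ K_h`, which `γ_div` controls. The reflection
`v_h ↦ v_h - 2p` preserves `|||·|||♯`, so `|||w_h|||♯ ≤ (1 + 2 C_st) |||v_h|||♯`, and normalizing
`w_h` gives the inf-sup bound.
-/

open scoped RealInnerProductSpace

namespace LinearMap.BilinForm

variable {E : Type*} [AddCommGroup E] [Module ℝ E] {B : LinearMap.BilinForm ℝ E}

theorem abs_apply_le_sqrt_mul_sqrt (hB : LinearMap.IsPosSemidef B) (x y : E) :
    |B x y| ≤ √(B x x) * √(B y y) := by
  rw [← Real.sqrt_mul (hB.nonneg x)]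
  exact Real.abs_le_sqrt (B.apply_sq_le_of_symm hB.nonneg hB.isSymm x y)

theorem apply_add_same (hB : LinearMap.IsPosSemidef B) (x y : E) :
    B (x + y) (x + y) = B x x + 2 * B x y + B y y := by
  have hsymm : B y x = B x y := hB.isSymm.eq y x
  simp only [map_add, LinearMap.add_apply, hsymm]
  ring

theorem sqrt_apply_add_le (hB : LinearMap.IsPosSemidef B) (x y : E) :
    √(B (x + y) (x + y)) ≤ √(B x x) + √(B y y) := by
  refine (Real.sqrt_le_left (by positivity)).2 ?_
  rw [apply_add_same hB, add_sq, Real.sq_sqrt (hB.nonneg x), Real.sq_sqrt (hB.nonneg y)]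
  linarith [(le_abs_self _).trans (abs_apply_le_sqrt_mul_sqrt hB x y)]

theorem sqrt_apply_smul (c : ℝ) (x : E) : √(B (c • x) (c • x)) = |c| * √(B x x) := by
  rw [map_smul, map_smul, smul_apply, smul_eq_mul, smul_eq_mul, ← mul_assoc, ← sq,
    Real.sqrt_mul (sq_nonneg c), Real.sqrt_sq_eq_abs]

theorem apply_same_le_apply_add_same (hB : LinearMap.IsPosSemidef B) {x y : E}
    (h : B x y = 0) : B x x ≤ B (x + y) (x + y) := by
  rw [apply_add_same hB, h]
  linarith [hB.nonneg y]

theorem abs_sub_apply_le_sqrt_mul_sqrt {B₁ B₂ : LinearMap.BilinForm ℝ E}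
    (h₁ : LinearMap.IsPosSemidef B₁) (h₂ : LinearMap.IsPosSemidef B₂) (x y : E) :
    |B₁ x y - B₂ x y| ≤ √((B₁ + B₂) x x) * √((B₁ + B₂) y y) :=
  calc |B₁ x y - B₂ x y| ≤ |B₁ x y| + |B₂ x y| := abs_sub _ _
    _ ≤ √(B₁ x x) * √(B₁ y y) + √(B₂ x x) * √(B₂ y y) :=
      add_le_add (abs_apply_le_sqrt_mul_sqrt h₁ x y) (abs_apply_le_sqrt_mul_sqrt h₂ x y)
    _ ≤ √((B₁ + B₂) x x) * √((B₁ + B₂) y y) := by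
      simpa [Fin.sum_univ_two] using Real.sum_sqrt_mul_sqrt_le Finset.univ
        (f := ![B₁ x x, B₂ x x]) (g := ![B₁ y y, B₂ y y])
        (fun i => by fin_cases i <;> simp [h₁.nonneg, h₂.nonneg])
        (fun i => by fin_cases i <;> simp [h₁.nonneg, h₂.nonneg])

end LinearMap.BilinForm

theorem two_mul_mul_le_inv_mul_add {a n σ ρ : ℝ} (ha : 0 ≤ a) (hσ : 0 ≤ σ) (hρ : 0 < ρ)
    (h : ρ * n ≤ √σ) : 2 * a * n ≤ ρ⁻¹ * (a ^ 2 + σ) := by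
  rw [le_inv_mul_iff₀ hρ]
  nlinarith [sq_nonneg (a - √σ), Real.sq_sqrt hσ, mul_le_mul_of_nonneg_left h ha]

theorem sq_le_inv_sq_mul {n σ ρ : ℝ} (hn : 0 ≤ n) (hσ : 0 ≤ σ) (hρ : 0 < ρ)
    (h : ρ * n ≤ √σ) : n ^ 2 ≤ ρ⁻¹ ^ 2 * σ := by
  have h2 : (ρ * n) ^ 2 ≤ σ := (Real.le_sqrt (by positivity) hσ).1 h
  calc n ^ 2 = ρ⁻¹ ^ 2 * (ρ * n) ^ 2 := by field_simp
    _ ≤ ρ⁻¹ ^ 2 * σ := mul_le_mul_of_nonneg_left h2 (sq_nonneg _)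

theorem sq_le_sq_mul_of_le_mul_sqrt {a g x y : ℝ} (ha : 0 ≤ a) (hx : 0 ≤ x) (hxy : x ≤ y)
    (h : a ≤ g * √x) : a ^ 2 ≤ g ^ 2 * y :=
  calc a ^ 2 ≤ (g * √x) ^ 2 := pow_le_pow_left₀ ha h 2
    _ = g ^ 2 * x := by rw [mul_pow, Real.sq_sqrt hx]
    _ ≤ g ^ 2 * y := mul_le_mul_of_nonneg_left hxy (sq_nonneg g)

theorem consistency_error_le {ω ρ γd σ c a b n E : ℝ} (hω : 0 ≤ ω) (hρ : 0 < ρ) (hγd : 0 ≤ γd)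
    (hσ : 0 ≤ σ) (hc : 0 ≤ c) (ha : 0 ≤ a) (hab : a ≤ b) (hE : ω * |E| ≤ γd * a * n)
    (hρn : ρ * n ≤ √σ) : 2 * ω ^ 2 * E ≤ ρ⁻¹ * γd * (ω ^ 2 * b ^ 2 + c + σ) := by
  have hamgm := two_mul_mul_le_inv_mul_add (by positivity : 0 ≤ ω * a) hσ hρ hρn
  have hab2 : (ω * a) ^ 2 + σ ≤ ω ^ 2 * b ^ 2 + c + σ := by
    have := pow_le_pow_left₀ ha hab 2
    nlinarith
  calc 2 * ω ^ 2 * E = 2 * ω * (ω * E) := by ring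
    _ ≤ 2 * ω * (ω * |E|) := by gcongr; exact le_abs_self E
    _ ≤ 2 * ω * (γd * a * n) := by gcongr
    _ = γd * (2 * (ω * a) * n) := by ring
    _ ≤ γd * (ρ⁻¹ * ((ω * a) ^ 2 + σ)) := by gcongr
    _ ≤ γd * (ρ⁻¹ * (ω ^ 2 * b ^ 2 + c + σ)) := by gcongr
    _ = ρ⁻¹ * γd * (ω ^ 2 * b ^ 2 + c + σ) := by ring

theorem divergence_defect_le {ω ρ γdiv σ c m n x : ℝ} (hρ : 0 < ρ) (hn : 0 ≤ n) (hσ : 0 ≤ σ)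
    (hc : 0 ≤ c) (hm : 0 ≤ m) (hρn : ρ * n ≤ √σ) (hx : (ω * x) ^ 2 ≤ γdiv ^ 2 * (c + n ^ 2)) :
    2 * ω ^ 2 * x ^ 2 ≤ 2 * (max 1 (ρ⁻¹ ^ 2) * γdiv ^ 2) * (m + c + σ) := by
  have hn2 := sq_le_inv_sq_mul hn hσ hρ hρn
  have hmax : c + n ^ 2 ≤ max 1 (ρ⁻¹ ^ 2) * (m + c + σ) :=
    calc c + n ^ 2 ≤ 1 * c + ρ⁻¹ ^ 2 * σ := by linarith
      _ ≤ max 1 (ρ⁻¹ ^ 2) * c + max 1 (ρ⁻¹ ^ 2) * σ := by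
        gcongr
        · exact le_max_left _ _
        · exact le_max_right _ _
      _ ≤ max 1 (ρ⁻¹ ^ 2) * (m + c + σ) := by
        rw [← mul_add]; gcongr; linarith
  calc 2 * ω ^ 2 * x ^ 2 = 2 * (ω * x) ^ 2 := by ring
    _ ≤ 2 * (γdiv ^ 2 * (max 1 (ρ⁻¹ ^ 2) * (m + c + σ))) := by
      gcongr; exact hx.trans (by gcongr)
    _ = 2 * (max 1 (ρ⁻¹ ^ 2) * γdiv ^ 2) * (m + c + σ) := by ring

theorem div_le_sSup_abs_of_exists {E : Type*} [AddCommGroup E] [Module ℝ E] {S : Submodule ℝ E}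
    {N f : E → ℝ} {a c K : ℝ} (hN : ∀ (r : ℝ) w, N (r • w) = |r| * N w) (hN0 : ∀ w, 0 ≤ N w)
    (hf : ∀ (r : ℝ) w, f (r • w) = r * f w) (hfK : ∀ w, |f w| ≤ K * N w) (hc : 0 < c)
    (hw : ∃ w ∈ S, N w ≤ a ∧ c ≤ f w) :
    c / a ≤ sSup {t | ∃ w ∈ S, N w = 1 ∧ t = |f w|} := by
  obtain ⟨w, hwS, hwa, hcw⟩ := hw
  have hNw : 0 < N w := by
    refine (hN0 w).lt_of_ne fun h => ?_
    have := (le_abs_self (f w)).trans (hfK w)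
    rw [← h, mul_zero] at this
    linarith
  have hbdd : BddAbove {t | ∃ w ∈ S, N w = 1 ∧ t = |f w|} := by
    refine ⟨K, ?_⟩
    rintro _ ⟨u, -, hu, rfl⟩
    simpa [hu] using hfK u
  refine le_csSup_of_le hbdd ⟨(N w)⁻¹ • w, S.smul_mem _ hwS, ?_, rfl⟩ ?_
  · rw [hN, abs_of_pos (inv_pos.2 hNw), inv_mul_cancel₀ hNw.ne']
  · calc c / a ≤ c / N w := div_le_div_of_nonneg_left hc.le hNw hwa
      _ ≤ (N w)⁻¹ * f w := by rw [div_eq_inv_mul]; gcongr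
      _ ≤ |f ((N w)⁻¹ • w)| := by rw [hf]; exact le_abs_self _

section

variable {L M : Type*} [NormedAddCommGroup L] [InnerProductSpace ℝ L]
  [NormedAddCommGroup M] [InnerProductSpace ℝ M]

noncomputable def curlForm (C : L →ₗ[ℝ] M) : LinearMap.BilinForm ℝ L := (innerₗ M).compl₁₂ C C

noncomputable def massForm (ω : ℝ) : LinearMap.BilinForm ℝ L := ω ^ 2 • innerₗ L

def bForm (ω : ℝ) (C : L →ₗ[ℝ] M) (v w : L) : ℝ := -ω ^ 2 * ⟪v, w⟫ + ⟪C v, C w⟫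

def bSharpForm (ω : ℝ) (C : L →ₗ[ℝ] M) (s : LinearMap.BilinForm ℝ L) (v w : L) : ℝ :=
  bForm ω C v w + s v w

def testFunction (ω : ℝ) (v p ζh : L) : L := v - (2 : ℝ) • p + (2 * ω ^ 2) • ζh

@[simp]
theorem curlForm_apply (C : L →ₗ[ℝ] M) (v w : L) : curlForm C v w = ⟪C v, C w⟫ := rfl

@[simp]
theorem massForm_apply (ω : ℝ) (v w : L) : massForm ω v w = ω ^ 2 * ⟪v, w⟫ := rfl

theorem isPosSemidef_curlForm (C : L →ₗ[ℝ] M) : LinearMap.IsPosSemidef (curlForm C) where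
  eq _ _ := real_inner_comm _ _
  nonneg _ := real_inner_self_nonneg

theorem isPosSemidef_massForm (ω : ℝ) :
    LinearMap.IsPosSemidef (massForm ω : LinearMap.BilinForm ℝ L) where
  eq v w := by rw [RingHom.id_apply, massForm_apply, massForm_apply, real_inner_comm]
  nonneg _ := mul_nonneg (sq_nonneg ω) real_inner_self_nonneg

variable {ω : ℝ} {C : L →ₗ[ℝ] M} {s : LinearMap.BilinForm ℝ L} {V Vh : Submodule ℝ L}

theorem tnorm_eq_sqrt (v : L) :
    tnorm ω C v = √((curlForm C + massForm ω : LinearMap.BilinForm ℝ L) v v) := by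
  simp only [tnorm, LinearMap.add_apply, curlForm_apply, massForm_apply,
    real_inner_self_eq_norm_sq, add_comm]

theorem tnormS_eq_sqrt (v : L) :
    tnormS ω C s v = √((curlForm C + s + massForm ω : LinearMap.BilinForm ℝ L) v v) := by
  simp only [tnormS, LinearMap.add_apply, curlForm_apply, massForm_apply,
    real_inner_self_eq_norm_sq]
  congr 1
  ring

theorem tnorm_nonneg (v : L) : 0 ≤ tnorm ω C v := Real.sqrt_nonneg _

theorem tnormS_sq (hs : ∀ v, 0 ≤ s v v) (v : L) :
    tnormS ω C s v ^ 2 = ω ^ 2 * ‖v‖ ^ 2 + ‖C v‖ ^ 2 + s v v :=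
  Real.sq_sqrt (by have := hs v; positivity)

theorem tnorm_le_tnormS (hs : ∀ v, 0 ≤ s v v) (v : L) : tnorm ω C v ≤ tnormS ω C s v :=
  Real.sqrt_le_sqrt (by linarith [hs v])

theorem tnormS_eq_tnorm_of_apply_self_eq_zero {v : L} (h : s v v = 0) :
    tnormS ω C s v = tnorm ω C v := by
  rw [tnormS, tnorm, h, add_zero]

theorem mul_norm_le_tnorm (v : L) : ω * ‖v‖ ≤ tnorm ω C v :=
  Real.le_sqrt_of_sq_le (by nlinarith [sq_nonneg ‖C v‖])

theorem tnormS_add_le (hs : LinearMap.IsPosSemidef s) (v w : L) :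
    tnormS ω C s (v + w) ≤ tnormS ω C s v + tnormS ω C s w := by
  simpa only [tnormS_eq_sqrt] using LinearMap.BilinForm.sqrt_apply_add_le
    (((isPosSemidef_curlForm C).add hs).add (isPosSemidef_massForm ω)) v w

theorem tnormS_smul (c : ℝ) (v : L) : tnormS ω C s (c • v) = |c| * tnormS ω C s v := by
  simp only [tnormS_eq_sqrt, LinearMap.BilinForm.sqrt_apply_smul]

theorem abs_bForm_le (v w : L) : |bForm ω C v w| ≤ tnorm ω C v * tnorm ω C w := by
  rw [tnorm_eq_sqrt, tnorm_eq_sqrt]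
  convert LinearMap.BilinForm.abs_sub_apply_le_sqrt_mul_sqrt (isPosSemidef_curlForm C)
    (isPosSemidef_massForm ω) v w using 2
  rw [bForm, curlForm_apply, massForm_apply]
  ring

theorem abs_bSharpForm_le (hs : LinearMap.IsPosSemidef s) (v w : L) :
    |bSharpForm ω C s v w| ≤ tnormS ω C s v * tnormS ω C s w := by
  rw [tnormS_eq_sqrt, tnormS_eq_sqrt]
  convert LinearMap.BilinForm.abs_sub_apply_le_sqrt_mul_sqrt
    ((isPosSemidef_curlForm C).add hs) (isPosSemidef_massForm ω) v w using 2
  simp only [bSharpForm, bForm, LinearMap.add_apply, curlForm_apply, massForm_apply]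
  ring

section Galerkin

variable {S : Submodule ℝ L} {z z' : L}

theorem tnorm_sub_le_of_forall_orthogonal
    (horth : ∀ w ∈ S, ω ^ 2 * ⟪z - z', w⟫ + ⟪C (z - z'), C w⟫ = 0) (hz' : z' ∈ S)
    {v : L} (hv : v ∈ S) : tnorm ω C (z - z') ≤ tnorm ω C (z - v) := by
  have h := horth (z' - v) (S.sub_mem hz' hv)
  rw [tnorm_eq_sqrt, tnorm_eq_sqrt, ← sub_add_sub_cancel z z' v]
  refine Real.sqrt_le_sqrt (LinearMap.BilinForm.apply_same_le_apply_add_same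
    ((isPosSemidef_curlForm C).add (isPosSemidef_massForm ω)) ?_)
  simp only [LinearMap.add_apply, curlForm_apply, massForm_apply]
  linarith

theorem tnorm_le_of_forall_orthogonal
    (horth : ∀ w ∈ S, ω ^ 2 * ⟪z - z', w⟫ + ⟪C (z - z'), C w⟫ = 0) (hz' : z' ∈ S) :
    tnorm ω C z' ≤ tnorm ω C z := by
  have h := horth z' hz'
  rw [tnorm_eq_sqrt, tnorm_eq_sqrt, ← add_sub_cancel z' z]
  refine Real.sqrt_le_sqrt (LinearMap.BilinForm.apply_same_le_apply_add_same
    ((isPosSemidef_curlForm C).add (isPosSemidef_massForm ω)) ?_)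
  simp only [LinearMap.add_apply, curlForm_apply, massForm_apply]
  rw [real_inner_comm (z - z'), real_inner_comm (C (z - z')), add_comm]
  exact h

theorem mul_tnorm_sub_le_of_sInf_le (hω : 0 ≤ ω)
    (horth : ∀ w ∈ S, ω ^ 2 * ⟪z - z', w⟫ + ⟪C (z - z'), C w⟫ = 0) (hz' : z' ∈ S) {r : ℝ}
    (hinf : sInf {t : ℝ | ∃ v ∈ S, t = ω * tnorm ω C (z - v)} ≤ r) :
    ω * tnorm ω C (z - z') ≤ r := by
  refine le_trans ?_ hinf
  refine le_csInf ⟨_, z', hz', rfl⟩ ?_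
  rintro _ ⟨v, hv, rfl⟩
  exact mul_le_mul_of_nonneg_left (tnorm_sub_le_of_forall_orthogonal horth hz' hv) hω

end Galerkin

theorem apply_sub_apply_self_eq_zero_of_orthogonal {S : Submodule ℝ L} {P : L →ₗ[ℝ] L}
    (hmem : ∀ v, P v ∈ S ∧ C (P v) = 0) (horth : ∀ v, ∀ w ∈ S, C w = 0 → ⟪v - P v, w⟫ = 0)
    (v : L) : P (v - P v) = 0 := by
  have hidem : P (P v) = P v := by
    have h := horth (P v) (P v - P (P v)) (S.sub_mem (hmem v).1 (hmem (P v)).1)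
      (by rw [map_sub, (hmem v).2, (hmem (P v)).2, sub_zero])
    exact (sub_eq_zero.1 (inner_self_eq_zero.1 h)).symm
  rw [map_sub, hidem, sub_self]

variable {v p q ζ ζh : L}

theorem norm_sub_sub_le (hθp : ⟪v - p - q, p⟫ = 0) (hθq : ⟪v - p - q, q⟫ = 0) :
    ‖v - p - q‖ ≤ ‖v‖ := by
  have h : ‖v - p - q‖ ^ 2 = ⟪v, v - p - q⟫ := by
    rw [← real_inner_self_eq_norm_sq, inner_sub_left, inner_sub_left, real_inner_comm _ p,
      real_inner_comm _ q, hθp, hθq, sub_zero, sub_zero]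
  rcases (norm_nonneg (v - p - q)).eq_or_lt with h0 | h0
  · rw [← h0]; exact norm_nonneg v
  · nlinarith [real_inner_le_norm v (v - p - q)]

theorem tnormS_sub_two_smul (hs_conf : ∀ v w : L, v ∈ V ∨ w ∈ V → s v w = 0) (hpV : p ∈ V)
    (hCp : C p = 0) (hp : ⟪v - p, p⟫ = 0) :
    tnormS ω C s (v - (2 : ℝ) • p) = tnormS ω C s v := by
  have hvp : ⟪v, p⟫ = ‖p‖ ^ 2 := by
    rw [inner_sub_left, real_inner_self_eq_norm_sq] at hp; linarith
  have hnorm : ‖v - (2 : ℝ) • p‖ ^ 2 = ‖v‖ ^ 2 := by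
    rw [norm_sub_sq_real, real_inner_smul_right, norm_smul, hvp]; norm_num; ring
  have hsp : ∀ w, s p w = 0 := fun w => hs_conf p w (Or.inl hpV)
  have hsp' : ∀ w, s w p = 0 := fun w => hs_conf w p (Or.inr hpV)
  simp only [tnormS, hnorm, map_sub, map_smul, hCp, smul_zero, sub_zero, LinearMap.sub_apply,
    LinearMap.smul_apply, hsp, hsp', smul_eq_mul, mul_zero]

theorem tnormS_testFunction_le {Cst : ℝ} {θ : L} (hω : 0 ≤ ω) (hCst : 0 ≤ Cst)
    (hs : LinearMap.IsPosSemidef s) (hs_conf : ∀ v w : L, v ∈ V ∨ w ∈ V → s v w = 0)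
    (hpV : p ∈ V) (hCp : C p = 0) (hp : ⟪v - p, p⟫ = 0) (hζhV : ζh ∈ V)
    (hζh : tnorm ω C ζh ≤ tnorm ω C ζ) (hstab : ω * tnorm ω C ζ ≤ Cst * ‖θ‖)
    (hθ : ω * ‖θ‖ ≤ tnormS ω C s v) :
    tnormS ω C s (testFunction ω v p ζh) ≤ (1 + 2 * Cst) * tnormS ω C s v := by
  have h₁ := mul_le_mul_of_nonneg_left hζh (by positivity : (0 : ℝ) ≤ 2 * ω ^ 2)
  have h₂ := mul_le_mul_of_nonneg_left hstab (by positivity : (0 : ℝ) ≤ 2 * ω)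
  have h₃ := mul_le_mul_of_nonneg_left hθ (by positivity : (0 : ℝ) ≤ 2 * Cst)
  calc tnormS ω C s (testFunction ω v p ζh)
      ≤ tnormS ω C s (v - (2 : ℝ) • p) + tnormS ω C s ((2 * ω ^ 2) • ζh) := tnormS_add_le hs _ _
    _ = tnormS ω C s v + 2 * ω ^ 2 * tnorm ω C ζh := by
      rw [tnormS_sub_two_smul hs_conf hpV hCp hp, tnormS_smul,
        tnormS_eq_tnorm_of_apply_self_eq_zero (hs_conf _ _ (Or.inl hζhV)),
        abs_of_nonneg (by positivity)]
    _ ≤ (1 + 2 * Cst) * tnormS ω C s v := by linarith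

theorem bSharpForm_testFunction_eq (hCp : C p = 0) (hsp : s v p = 0) (hsζ : s v ζ = 0)
    (hsζh : s v ζh = 0) (hp : ⟪v - p, p⟫ = 0) (hθp : ⟪v - p - q, p⟫ = 0)
    (hθq : ⟪v - p - q, q⟫ = 0) :
    bSharpForm ω C s v (testFunction ω v p ζh) =
      (ω ^ 2 * ‖v‖ ^ 2 + ‖C v‖ ^ 2 + s v v) - 2 * ω ^ 2 * ‖q‖ ^ 2
        - 2 * ω ^ 2 * (⟪v, v - p - q⟫ - bSharpForm ω C s v ζ)
        - 2 * ω ^ 2 * bForm ω C v (ζ - ζh) := by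
  simp only [inner_sub_left, real_inner_self_eq_norm_sq] at hp hθp hθq
  simp only [bSharpForm, bForm, testFunction, map_add, map_sub, map_smul, hCp, smul_zero,
    sub_zero, inner_add_right, inner_sub_right, real_inner_smul_right, smul_eq_mul, hsp, hsζ,
    hsζh, real_inner_self_eq_norm_sq]
  linear_combination (-2 * ω ^ 2) * hθq + (-2 * ω ^ 2) * hp + (2 * ω ^ 2) * hθp
    + (-2 * ω ^ 2) * real_inner_comm q p

theorem approximation_error_le {γp : ℝ} {θ : L} (hω : 0 ≤ ω) (hγp : 0 ≤ γp)
    (happrox : ω * tnorm ω C (ζ - ζh) ≤ γp * ‖θ‖) (hθ : ω * ‖θ‖ ≤ tnorm ω C v) :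
    2 * ω ^ 2 * bForm ω C v (ζ - ζh) ≤ 2 * γp * (ω ^ 2 * ‖v‖ ^ 2 + ‖C v‖ ^ 2) := by
  have h0 := tnorm_nonneg (ω := ω) (C := C) v
  calc 2 * ω ^ 2 * bForm ω C v (ζ - ζh)
      ≤ 2 * ω * tnorm ω C v * (ω * tnorm ω C (ζ - ζh)) := by
        rw [show 2 * ω * tnorm ω C v * (ω * tnorm ω C (ζ - ζh)) =
          2 * ω ^ 2 * (tnorm ω C v * tnorm ω C (ζ - ζh)) by ring]
        gcongr; exact (le_abs_self _).trans (abs_bForm_le v (ζ - ζh))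
    _ ≤ 2 * ω * tnorm ω C v * (γp * ‖θ‖) := by gcongr
    _ = 2 * γp * (tnorm ω C v * (ω * ‖θ‖)) := by ring
    _ ≤ 2 * γp * tnorm ω C v ^ 2 := by rw [sq]; gcongr
    _ = 2 * γp * (ω ^ 2 * ‖v‖ ^ 2 + ‖C v‖ ^ 2) := by
      rw [tnorm, Real.sq_sqrt (by positivity)]

theorem le_bSharpForm_testFunction {γp γd γdiv ρ n : ℝ} (hω : 0 < ω) (hρ : 0 < ρ)
    (hγp : 0 ≤ γp) (hγd : 0 ≤ γd) (hs_pos : ∀ v, 0 ≤ s v v)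
    (hs_conf : ∀ v w : L, v ∈ V ∨ w ∈ V → s v w = 0)
    (hpV : p ∈ V) (hζV : ζ ∈ V) (hζhV : ζh ∈ V) (hCp : C p = 0)
    (hp : ⟪v - p, p⟫ = 0) (hθp : ⟪v - p - q, p⟫ = 0) (hθq : ⟪v - p - q, q⟫ = 0)
    (hcons : ω * |⟪v, v - p - q⟫ - bSharpForm ω C s v ζ| ≤ γd * ‖v - p - q‖ * n)
    (happrox : ω * tnorm ω C (ζ - ζh) ≤ γp * ‖v - p - q‖)
    (hq : (ω * ‖q‖) ^ 2 ≤ γdiv ^ 2 * (‖C v‖ ^ 2 + n ^ 2))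
    (hn : 0 ≤ n) (hρn : ρ * n ≤ √(s v v)) :
    (1 - 2 * (γp + ρ⁻¹ * γd / 2 + max 1 (ρ⁻¹ ^ 2) * γdiv ^ 2)) *
        (ω ^ 2 * ‖v‖ ^ 2 + ‖C v‖ ^ 2 + s v v) ≤
      bSharpForm ω C s v (testFunction ω v p ζh) := by
  have hθv := norm_sub_sub_le hθp hθq
  have hE₁ := consistency_error_le hω.le hρ hγd (hs_pos v) (sq_nonneg ‖C v‖) (norm_nonneg _)
    hθv hcons hρn
  have hE₂ := approximation_error_le hω.le hγp happrox
    ((mul_le_mul_of_nonneg_left hθv hω.le).trans (mul_norm_le_tnorm v))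
  have hQ := divergence_defect_le hρ hn (hs_pos v) (sq_nonneg ‖C v‖)
    (by positivity : 0 ≤ ω ^ 2 * ‖v‖ ^ 2) hρn hq
  rw [bSharpForm_testFunction_eq hCp (hs_conf _ _ (Or.inr hpV)) (hs_conf _ _ (Or.inr hζV))
    (hs_conf _ _ (Or.inr hζhV)) hp hθp hθq]
  linarith [mul_nonneg hγp (hs_pos v)]

theorem exists_testFunction_bounds (hω : 0 < ω) (hs : LinearMap.IsPosSemidef s)
    (hs_conf : ∀ v w : L, v ∈ V ∨ w ∈ V → s v w = 0)
    {nc : Seminorm ℝ L} (hnc_conf : ∀ v ∈ V, nc v = 0)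
    {projK : L →ₗ[ℝ] L} (hprojK_mem : ∀ v : L, projK v ∈ V ∧ C (projK v) = 0)
    (hprojK_orth : ∀ v : L, ∀ w ∈ V, C w = 0 → ⟪v - projK v, w⟫ = 0)
    {projKh : L →ₗ[ℝ] L} (hprojKh_mem : ∀ v : L, projKh v ∈ Vh ⊓ V ∧ C (projKh v) = 0)
    (hprojKh_orth : ∀ v : L, ∀ w ∈ Vh ⊓ V, C w = 0 → ⟪v - projKh v, w⟫ = 0)
    {γp γd Cst : ℝ} (hγp : 0 ≤ γp) (hγd : 0 ≤ γd) (hCst : 0 ≤ Cst)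
    (hadj : ∀ θ : L, (∀ w ∈ V, C w = 0 → ⟪θ, w⟫ = 0) →
      ∃ ζ ∈ V, (∀ w ∈ V, -ω ^ 2 * ⟪w, ζ⟫ + ⟪C w, C ζ⟫ = ⟪w, θ⟫) ∧
        ω * tnorm ω C ζ ≤ Cst * ‖θ‖ ∧
        sInf {t : ℝ | ∃ v ∈ Vh ⊓ V, t = ω * tnorm ω C (ζ - v)} ≤ γp * ‖θ‖ ∧
        ∀ wh ∈ Vh,
          ω * |⟪wh, θ⟫ - (-ω ^ 2 * ⟪wh, ζ⟫ + ⟪C wh, C ζ⟫ + s wh ζ)| ≤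
            γd * ‖θ‖ * nc wh)
    {γdiv : ℝ} (hdiv : ∀ vh ∈ Vh, projKh vh = 0 →
      ω * ‖projK vh‖ ≤ γdiv * Real.sqrt (‖C vh‖ ^ 2 + nc vh ^ 2))
    {Pc : L →ₗ[ℝ] L} (hPc_mem : ∀ v ∈ V, Pc v ∈ Vh ⊓ V)
    (hPc_orth : ∀ v ∈ V, ∀ w ∈ Vh ⊓ V,
      ω ^ 2 * ⟪v - Pc v, w⟫ + ⟪C (v - Pc v), C w⟫ = 0)
    {ρ : ℝ} (hρ : 0 < ρ) (hρs : ∀ vh ∈ Vh, ρ * nc vh ≤ Real.sqrt (s vh vh))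
    {vh : L} (hvh : vh ∈ Vh) :
    ∃ wh ∈ Vh,
      tnormS ω C s wh ≤ (1 + 2 * Cst) * tnormS ω C s vh ∧
      (1 - 2 * (γp + ρ⁻¹ * γd / 2 + max 1 (ρ⁻¹ ^ 2) * γdiv ^ 2)) *
          (ω ^ 2 * ‖vh‖ ^ 2 + ‖C vh‖ ^ 2 + s vh vh) ≤
        -ω ^ 2 * ⟪vh, wh⟫ + ⟪C vh, C wh⟫ + s vh wh := by
  obtain ⟨hpVhV, hCp⟩ := hprojKh_mem vh
  obtain ⟨hpVh, hpV⟩ := Submodule.mem_inf.1 hpVhV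
  obtain ⟨hqV, hCq⟩ := hprojK_mem (vh - projKh vh)
  have hθK := hprojK_orth (vh - projKh vh)
  obtain ⟨ζ, hζV, -, hstab, hinf, hcons⟩ := hadj _ hθK
  obtain ⟨hζhVh, hζhV⟩ := Submodule.mem_inf.1 (hPc_mem ζ hζV)
  have hp := hprojKh_orth vh _ hpVhV hCp
  have hθp := hθK _ hpV hCp
  have hθq := hθK _ hqV hCq
  have hθv := norm_sub_sub_le hθp hθq
  have hq : (ω * ‖projK (vh - projKh vh)‖) ^ 2 ≤ γdiv ^ 2 * (‖C vh‖ ^ 2 + nc vh ^ 2) := by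
    have h := hdiv _ (Vh.sub_mem hvh hpVh)
      (apply_sub_apply_self_eq_zero_of_orthogonal hprojKh_mem hprojKh_orth vh)
    rw [map_sub C, hCp, sub_zero] at h
    refine sq_le_sq_mul_of_le_mul_sqrt (by positivity) (by positivity) ?_ h
    have : nc (vh - projKh vh) ≤ nc vh := by
      simpa [hnc_conf _ hpV] using map_sub_le_add nc vh (projKh vh)
    gcongr
  refine ⟨testFunction ω vh (projKh vh) (Pc ζ), Vh.add_mem (Vh.sub_mem hvh (Vh.smul_mem _ hpVh)) (Vh.smul_mem _ hζhVh),
    tnormS_testFunction_le hω.le hCst hs hs_conf hpV hCp hp hζhV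
      (tnorm_le_of_forall_orthogonal (hPc_orth ζ hζV) (hPc_mem ζ hζV)) hstab
      ((mul_le_mul_of_nonneg_left hθv hω.le).trans
        ((mul_norm_le_tnorm vh).trans (tnorm_le_tnormS hs.nonneg vh))),
    le_bSharpForm_testFunction hω hρ hγp hγd hs.nonneg hs_conf hpV hζV hζhV hCp hp hθp hθq
      (hcons vh hvh) (mul_tnorm_sub_le_of_sInf_le hω.le (hPc_orth ζ hζV) (hPc_mem ζ hζV) hinf)
      hq (apply_nonneg nc vh) (hρs vh hvh)⟩

end

theorem discrete_inf_sup_stability_general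
    {L M : Type*} [NormedAddCommGroup L] [InnerProductSpace ℝ L]
    [NormedAddCommGroup M] [InnerProductSpace ℝ M]
    (ω : ℝ) (hω : 0 < ω)
    (V Vh : Submodule ℝ L)
    (C : L →ₗ[ℝ] M)
    (s : L →ₗ[ℝ] L →ₗ[ℝ] ℝ)
    (hs_symm : ∀ v w : L, s v w = s w v)
    (hs_pos : ∀ v : L, 0 ≤ s v v)
    (hs_conf : ∀ v w : L, v ∈ V ∨ w ∈ V → s v w = 0)
    (nc : L → ℝ)
    (hnc_add : ∀ v w : L, nc (v + w) ≤ nc v + nc w)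
    (hnc_smul : ∀ (c : ℝ) (v : L), nc (c • v) = |c| * nc v)
    (hnc_conf : ∀ v ∈ V, nc v = 0)
    (projK : L →ₗ[ℝ] L)
    (hprojK_mem : ∀ v : L, projK v ∈ V ∧ C (projK v) = 0)
    (hprojK_orth : ∀ v : L, ∀ w ∈ V, C w = 0 → ⟪v - projK v, w⟫ = 0)
    (projKh : L →ₗ[ℝ] L)
    (hprojKh_mem : ∀ v : L, projKh v ∈ Vh ⊓ V ∧ C (projKh v) = 0)
    (hprojKh_orth : ∀ v : L, ∀ w ∈ Vh ⊓ V, C w = 0 → ⟪v - projKh v, w⟫ = 0)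
    (γp γd Cst : ℝ) (hγp : 0 ≤ γp) (hγd : 0 ≤ γd) (hCst : 0 ≤ Cst)
    (hadj : ∀ θ : L, (∀ w ∈ V, C w = 0 → ⟪θ, w⟫ = 0) →
      ∃ ζ ∈ V, (∀ w ∈ V, -ω ^ 2 * ⟪w, ζ⟫ + ⟪C w, C ζ⟫ = ⟪w, θ⟫) ∧
        ω * tnorm ω C ζ ≤ Cst * ‖θ‖ ∧
        sInf {t : ℝ | ∃ v ∈ Vh ⊓ V, t = ω * tnorm ω C (ζ - v)} ≤ γp * ‖θ‖ ∧
        ∀ wh ∈ Vh,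
          ω * |⟪wh, θ⟫ - (-ω ^ 2 * ⟪wh, ζ⟫ + ⟪C wh, C ζ⟫ + s wh ζ)| ≤
            γd * ‖θ‖ * nc wh)
    (γdiv : ℝ)
    (hdiv : ∀ vh ∈ Vh, projKh vh = 0 →
      ω * ‖projK vh‖ ≤ γdiv * Real.sqrt (‖C vh‖ ^ 2 + nc vh ^ 2))
    (Pc : L →ₗ[ℝ] L)
    (hPc_mem : ∀ v ∈ V, Pc v ∈ Vh ⊓ V)
    (hPc_orth : ∀ v ∈ V, ∀ w ∈ Vh ⊓ V,
      ω ^ 2 * ⟪v - Pc v, w⟫ + ⟪C (v - Pc v), C w⟫ = 0)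
    (ρ : ℝ) (hρ : 0 < ρ)
    (hρs : ∀ vh ∈ Vh, ρ * nc vh ≤ Real.sqrt (s vh vh)) :
    (∀ vh ∈ Vh, ∃ wh ∈ Vh,
      tnormS ω C s wh ≤ (1 + 2 * Cst) * tnormS ω C s vh ∧
      (1 - 2 * (γp + ρ⁻¹ * γd / 2 + max 1 (ρ⁻¹ ^ 2) * γdiv ^ 2)) *
          (ω ^ 2 * ‖vh‖ ^ 2 + ‖C vh‖ ^ 2 + s vh vh) ≤
        -ω ^ 2 * ⟪vh, wh⟫ + ⟪C vh, C wh⟫ + s vh wh) ∧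
    (2 * (γp + ρ⁻¹ * γd / 2 + max 1 (ρ⁻¹ ^ 2) * γdiv ^ 2) < 1 →
      ∀ vh ∈ Vh, tnormS ω C s vh = 1 →
        (1 - 2 * (γp + ρ⁻¹ * γd / 2 + max 1 (ρ⁻¹ ^ 2) * γdiv ^ 2)) / (1 + 2 * Cst) ≤
          sSup {t : ℝ | ∃ wh ∈ Vh, tnormS ω C s wh = 1 ∧
            t = |(-ω ^ 2 * ⟪vh, wh⟫ + ⟪C vh, C wh⟫ + s vh wh)|}) := by
  have hs : LinearMap.IsPosSemidef s := ⟨⟨hs_symm⟩, ⟨hs_pos⟩⟩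
  let ncSeminorm : Seminorm ℝ L :=
    Seminorm.of nc hnc_add fun c v => by rw [hnc_smul, Real.norm_eq_abs]
  have key := fun vh (hvh : vh ∈ Vh) =>
    exists_testFunction_bounds (nc := ncSeminorm) hω hs hs_conf hnc_conf hprojK_mem hprojK_orth
      hprojKh_mem hprojKh_orth hγp hγd hCst hadj hdiv hPc_mem hPc_orth hρ hρs hvh
  refine ⟨key, fun hc vh hvh hvh1 => div_le_sSup_abs_of_exists (K := 1) tnormS_smul
    (fun _ => Real.sqrt_nonneg _) (fun r w => ?_) (fun w => ?_) (by linarith) ?_⟩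
  · simp only [map_smul, real_inner_smul_right, smul_eq_mul]; ring
  · exact (abs_bSharpForm_le hs vh w).trans_eq (by rw [hvh1])
  · obtain ⟨wh, hwh, hle, hge⟩ := key vh hvh
    refine ⟨wh, hwh, hle.trans_eq (by rw [hvh1, mul_one]), ?_⟩
    rwa [← tnormS_sq hs_pos, hvh1, one_pow, mul_one] at hge

/-- **Discrete inf-sup stability.**
For every `v_h ∈ V_h` there exists `w_h ∈ V_h` with
`|||w_h|||♯ ≤ (1 + 2 C_st) |||v_h|||♯` and `b♯(v_h, w_h) ≥ (1 − c'_γ) |||v_h|||♯²`, where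
`c'_γ := 2(γ_p + ρ⁻¹ γ_d / 2 + max(1, ρ⁻²) γ_div²)`. In particular, if `c'_γ < 1`, then
for every `v_h ∈ V_h` with `|||v_h|||♯ = 1`,
`sup_{w_h ∈ V_h, |||w_h|||♯ = 1} |b♯(v_h, w_h)| ≥ (1 − c'_γ)/(1 + 2 C_st)`. -/
theorem discrete_inf_sup_stability
    {L M : Type*} [NormedAddCommGroup L] [InnerProductSpace ℝ L]
    [NormedAddCommGroup M] [InnerProductSpace ℝ M]
    (ω : ℝ) (hω : 0 < ω)
    (Vs V Vh : Submodule ℝ L) (hVVs : V ≤ Vs) (hVhVs : Vh ≤ Vs)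
    (C : L →ₗ[ℝ] M)
    (s : L →ₗ[ℝ] L →ₗ[ℝ] ℝ)
    (hs_symm : ∀ v w : L, s v w = s w v)
    (hs_pos : ∀ v : L, 0 ≤ s v v)
    (hs_conf : ∀ v w : L, v ∈ V ∨ w ∈ V → s v w = 0)
    (nc : L → ℝ)
    (hnc_nonneg : ∀ v : L, 0 ≤ nc v)
    (hnc_add : ∀ v w : L, nc (v + w) ≤ nc v + nc w)
    (hnc_smul : ∀ (c : ℝ) (v : L), nc (c • v) = |c| * nc v)
    (hnc_conf : ∀ v ∈ V, nc v = 0)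
    (projK : L →ₗ[ℝ] L)
    (hprojK_mem : ∀ v : L, projK v ∈ V ∧ C (projK v) = 0)
    (hprojK_orth : ∀ v : L, ∀ w ∈ V, C w = 0 → ⟪v - projK v, w⟫ = 0)
    (projKh : L →ₗ[ℝ] L)
    (hprojKh_mem : ∀ v : L, projKh v ∈ Vh ⊓ V ∧ C (projKh v) = 0)
    (hprojKh_orth : ∀ v : L, ∀ w ∈ Vh ⊓ V, C w = 0 → ⟪v - projKh v, w⟫ = 0)
    (γp γd Cst : ℝ) (hγp : 0 ≤ γp) (hγd : 0 ≤ γd) (hCst : 0 ≤ Cst)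
    (hadj : ∀ θ : L, (∀ w ∈ V, C w = 0 → ⟪θ, w⟫ = 0) →
      ∃ ζ ∈ V, (∀ w ∈ V, -ω ^ 2 * ⟪w, ζ⟫ + ⟪C w, C ζ⟫ = ⟪w, θ⟫) ∧
        ω * tnorm ω C ζ ≤ Cst * ‖θ‖ ∧
        sInf {t : ℝ | ∃ v ∈ Vh ⊓ V, t = ω * tnorm ω C (ζ - v)} ≤ γp * ‖θ‖ ∧
        ∀ wh ∈ Vh,
          ω * |⟪wh, θ⟫ - (-ω ^ 2 * ⟪wh, ζ⟫ + ⟪C wh, C ζ⟫ + s wh ζ)| ≤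
            γd * ‖θ‖ * nc wh)
    (γdiv : ℝ) (hγdiv : 0 ≤ γdiv)
    (hdiv : ∀ vh ∈ Vh, projKh vh = 0 →
      ω * ‖projK vh‖ ≤ γdiv * Real.sqrt (‖C vh‖ ^ 2 + nc vh ^ 2))
    (Pc : L →ₗ[ℝ] L)
    (hPc_mem : ∀ v ∈ V, Pc v ∈ Vh ⊓ V)
    (hPc_orth : ∀ v ∈ V, ∀ w ∈ Vh ⊓ V,
      ω ^ 2 * ⟪v - Pc v, w⟫ + ⟪C (v - Pc v), C w⟫ = 0)
    (ρ : ℝ) (hρ : 0 < ρ)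
    (hρs : ∀ vh ∈ Vh, ρ * nc vh ≤ Real.sqrt (s vh vh)) :
    (∀ vh ∈ Vh, ∃ wh ∈ Vh,
      tnormS ω C s wh ≤ (1 + 2 * Cst) * tnormS ω C s vh ∧
      (1 - 2 * (γp + ρ⁻¹ * γd / 2 + max 1 (ρ⁻¹ ^ 2) * γdiv ^ 2)) *
          (ω ^ 2 * ‖vh‖ ^ 2 + ‖C vh‖ ^ 2 + s vh vh) ≤
        -ω ^ 2 * ⟪vh, wh⟫ + ⟪C vh, C wh⟫ + s vh wh) ∧
    (2 * (γp + ρ⁻¹ * γd / 2 + max 1 (ρ⁻¹ ^ 2) * γdiv ^ 2) < 1 →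
      ∀ vh ∈ Vh, tnormS ω C s vh = 1 →
        (1 - 2 * (γp + ρ⁻¹ * γd / 2 + max 1 (ρ⁻¹ ^ 2) * γdiv ^ 2)) / (1 + 2 * Cst) ≤
          sSup {t : ℝ | ∃ wh ∈ Vh, tnormS ω C s wh = 1 ∧
            t = |(-ω ^ 2 * ⟪vh, wh⟫ + ⟪C vh, C wh⟫ + s vh wh)|}) :=
  discrete_inf_sup_stability_general ω hω V Vh C s hs_symm hs_pos hs_conf nc hnc_add hnc_smul
    hnc_conf projK hprojK_mem hprojK_orth projKh hprojKh_mem hprojKh_orth γp γd Cst hγp hγd hCst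
    hadj γdiv hdiv Pc hPc_mem hPc_orth ρ hρ hρs
end
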